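/- For every configuration ω ∈ Ω, if the vertex set V(T_{(1,1)}^ω) is infinite, then there exists an infinite sequence (z_n)_{n≥0} of sites with z_0 = (0,0) and z_{n+1} − z_n ∈ {(1,0),(0,1)} for all n, such that z_n = (1,1) for some n and for every n the initial segment (z_0,…,z_n) equals the low-optimal path γ_{z_n}^ω; in particular this infinite low-optimal path is non trivial, i.e. it coincides with neither of the two axes ℤ₊(1,0) and ℤ₊(0,1). -/

import Mathlib

open scoped NNReal

/-- A site of the lattice `ℤ²`. -/
abbrev Site : Type := ℤ × ℤ

/-- The positive quadrant `ℤ₊²`. -/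
def posQuad : Set Site := {z : Site | 0 ≤ z.1 ∧ 0 ≤ z.2}

/-- An admissible (up-right) step. -/
def IsStep (u v : Site) : Prop := v = u + (1, 0) ∨ v = u + (0, 1)

/-- `γ` is an up-right path from `(0,0)` to `z`, i.e. `γ ∈ Γ_z`. -/
def IsPathTo (z : Site) (γ : List Site) : Prop :=
  γ.head? = some ((0, 0) : Site) ∧ γ.getLast? = some z ∧ γ.Chain' IsStep

/-- The length `ω(γ) = Σ_{z ∈ γ} ω(z)` of a path `γ` under the configuration `ω`. -/
noncomputable def plen (ω : Site → ℝ) (γ : List Site) : ℝ := (γ.map ω).sum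

/-- `γ ∈ Γ_z` is `ω`-optimal if its length is maximal over `Γ_z`. -/
def IsOptimal (ω : Site → ℝ) (z : Site) (γ : List Site) : Prop :=
  IsPathTo z γ ∧ ∀ γ' : List Site, IsPathTo z γ' → plen ω γ' ≤ plen ω γ

/-- `γ` is below `γ'`: at every step index, the second coordinate of the site of `γ`
is at most that of the corresponding site of `γ'`. -/
def Below (γ γ' : List Site) : Prop :=
  ∀ (i : ℕ) (h : i < γ.length) (h' : i < γ'.length),
    (γ.get ⟨i, h⟩).2 ≤ (γ'.get ⟨i, h'⟩).2

/-- `γ` is the low-optimal path of `Γ_z`: it is `ω`-optimal and below every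
`ω`-optimal path of `Γ_z`. -/
def IsLowOptimal (ω : Site → ℝ) (z : Site) (γ : List Site) : Prop :=
  IsOptimal ω z γ ∧ ∀ γ' : List Site, IsOptimal ω z γ' → Below γ γ'

open Classical in
/-- The low-optimal path `γ_z^ω` (an arbitrary default when it does not exist). -/
noncomputable def lowOpt (ω : Site → ℝ) (z : Site) : List Site :=
  if h : ∃ γ : List Site, IsLowOptimal ω z γ then h.choose else []

/-- The vertex set `V(T_z^ω) = {z' ∈ ℤ₊² : z ∈ γ_{z'}^ω}` of the subtree rooted at `z`. -/
def treeV (ω : Site → ℝ) (z : Site) : Set Site :=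
  {z' : Site | z' ∈ posQuad ∧ z ∈ lowOpt ω z'}

/-! The low-optimal paths form a tree rooted at `(0,0)`: optimal paths to `z` are closed under
the site-wise minimum, so a lowest one exists, and every initial segment of a low-optimal path is
again low-optimal. Each vertex has at most two children, so Kőnig's argument turns the infinitely
many vertices of `T_{(1,1)}` into an infinite branch through `(1,1)`, which is then neither
axis. -/

lemma isStep_iff {u v : Site} :
    IsStep u v ↔ v.1 + v.2 = u.1 + u.2 + 1 ∧ u.2 ≤ v.2 ∧ v.2 ≤ u.2 + 1 := by
  obtain ⟨a, b⟩ := u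
  obtain ⟨c, d⟩ := v
  simp only [IsStep, Prod.mk_add_mk, Prod.mk.injEq]
  omega

lemma IsStep.add_fst_snd {u v : Site} (h : IsStep u v) : v.1 + v.2 = u.1 + u.2 + 1 :=
  (isStep_iff.1 h).1

namespace IsPathTo

variable {z : Site} {γ γ' : List Site}

lemma ne_nil (h : IsPathTo z γ) : γ ≠ [] := by
  rintro rfl
  simp [IsPathTo] at h

lemma getElem_zero (h : IsPathTo z γ) (h0 : 0 < γ.length) : γ[0] = (0, 0) := by
  simpa [List.head?_eq_getElem?, List.getElem?_eq_getElem h0] using h.1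

lemma getElem_of_add_one_eq_length (h : IsPathTo z γ) {i : ℕ} (hi : i + 1 = γ.length) :
    γ[i] = z := by
  have := h.2.1
  rwa [List.getLast?_eq_getElem?, ← hi, Nat.add_sub_cancel, List.getElem?_eq_getElem,
    Option.some_inj] at this

lemma isStep_getElem (h : IsPathTo z γ) {i : ℕ} (hi : i + 1 < γ.length) :
    IsStep γ[i] γ[i + 1] :=
  h.2.2.getElem i hi

lemma getElem_coords (h : IsPathTo z γ) (i : ℕ) (hi : i < γ.length) :
    γ[i].1 + γ[i].2 = i ∧ 0 ≤ γ[i].2 ∧ γ[i].2 ≤ i := by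
  induction i with
  | zero => simp [h.getElem_zero hi]
  | succ i ih =>
    have := ih (by omega)
    have := isStep_iff.1 (h.isStep_getElem hi)
    push_cast
    omega

lemma length_pos (h : IsPathTo z γ) : 0 < γ.length :=
  List.length_pos_iff.2 h.ne_nil

lemma length_eq (h : IsPathTo z γ) : (γ.length : ℤ) = z.1 + z.2 + 1 := by
  have hl : γ.length - 1 < γ.length := by have := h.length_pos; omega
  have := (h.getElem_coords _ hl).1
  rw [h.getElem_of_add_one_eq_length (by omega)] at this
  omega

lemma length_eq_length (h : IsPathTo z γ) (h' : IsPathTo z γ') :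
    γ.length = γ'.length := by
  have := h.length_eq
  have := h'.length_eq
  omega

lemma eq_of_mem (h : IsPathTo z γ) {u v : Site} (hu : u ∈ γ) (hv : v ∈ γ)
    (huv : u.1 + u.2 = v.1 + v.2) : u = v := by
  obtain ⟨i, hi, rfl⟩ := List.mem_iff_getElem.1 hu
  obtain ⟨j, hj, rfl⟩ := List.mem_iff_getElem.1 hv
  have hij : i = j := by
    have := (h.getElem_coords i hi).1
    have := (h.getElem_coords j hj).1
    omega
  subst hij
  rfl

lemma ext (h : IsPathTo z γ) (h' : IsPathTo z γ')
    (hsnd : ∀ i (hi : i < γ.length) (hi' : i < γ'.length), γ[i].2 = γ'[i].2) : γ = γ' := by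
  refine List.ext_getElem (h.length_eq_length h') fun i hi hi' => Prod.ext ?_ (hsnd i hi hi')
  have := (h.getElem_coords i hi).1
  have := (h'.getElem_coords i hi').1
  have := hsnd i hi hi'
  omega

lemma snoc (h : IsPathTo z γ) {w : Site} (hw : IsStep z w) : IsPathTo w (γ ++ [w]) := by
  obtain ⟨h0, hz, hc⟩ := h
  refine ⟨by simp [h0], List.getLast?_concat, hc.append (List.isChain_singleton w) ?_⟩
  simp [hz, hw]

lemma take (h : IsPathTo z γ) {k : ℕ} (hk : k < γ.length) :
    IsPathTo γ[k] (γ.take (k + 1)) := by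
  refine ⟨?_, ?_, h.2.2.take _⟩
  · simp [List.head?_take, h.1]
  · rw [List.getLast?_eq_getElem?]
    simp [Nat.min_eq_left (show k + 1 ≤ γ.length by omega)]

lemma splice {w : Site} {l₁ l₂ δ : List Site} (h : IsPathTo z (l₁ ++ l₂))
    (h₁ : IsPathTo w l₁) (hδ : IsPathTo w δ) : IsPathTo z (δ ++ l₂) := by
  have hlast : δ.getLast? = l₁.getLast? := hδ.2.1.trans h₁.2.1.symm
  obtain ⟨h0, hz, hc⟩ := h
  refine ⟨?_, ?_, ?_⟩
  · rw [List.head?_append, hδ.1]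
    rwa [List.head?_append, h₁.1] at h0
  · rwa [List.getLast?_append, hlast, ← List.getLast?_append]
  · obtain ⟨-, hc₂, hj⟩ := List.isChain_append.1 hc
    exact hδ.2.2.append hc₂ (hlast ▸ hj)

lemma exists_isStep_of_mem (h : IsPathTo z γ) {w : Site} (hw : w ∈ γ) (hwz : w ≠ z) :
    ∃ w' ∈ γ, IsStep w w' := by
  obtain ⟨k, hk, rfl⟩ := List.mem_iff_getElem.1 hw
  have hk1 : k + 1 < γ.length := by
    by_contra hk1
    exact hwz (h.getElem_of_add_one_eq_length (by omega))
  exact ⟨γ[k + 1], List.getElem_mem hk1, h.isStep_getElem hk1⟩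

lemma zipWith {f : Site → Site → Site} (hf : ∀ u v, f u v = u ∨ f u v = v)
    (hstep : ∀ {a b a' b' : Site}, IsStep a b → IsStep a' b' → a.1 + a.2 = a'.1 + a'.2 →
      IsStep (f a a') (f b b'))
    (h : IsPathTo z γ) (h' : IsPathTo z γ') : IsPathTo z (γ.zipWith f γ') := by
  have hl := h.length_eq_length h'
  have hpos := h.length_pos
  have hlen : (γ.zipWith f γ').length = γ.length := by simp [hl]
  have hself : ∀ u, f u u = u := fun u => (hf u u).elim id id
  refine ⟨?_, ?_, List.isChain_iff_getElem.2 fun i hi => ?_⟩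
  · rw [List.head?_eq_getElem?, List.getElem?_eq_getElem (by omega), List.getElem_zipWith,
      h.getElem_zero hpos, h'.getElem_zero (by omega), hself]
  · rw [List.getLast?_eq_getElem?, List.getElem?_eq_getElem (by omega), List.getElem_zipWith,
      h.getElem_of_add_one_eq_length (by omega), h'.getElem_of_add_one_eq_length (by omega), hself]
  · simp only [List.getElem_zipWith]
    refine hstep (h.isStep_getElem (by omega)) (h'.isStep_getElem (by omega)) ?_
    rw [(h.getElem_coords i (by omega)).1, (h'.getElem_coords i (by omega)).1]

end IsPathTo

lemma exists_isPathTo {z : Site} (hz : z ∈ posQuad) : ∃ γ, IsPathTo z γ := by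
  obtain ⟨a, b⟩ := z
  obtain ⟨ha, hb⟩ : 0 ≤ a ∧ 0 ≤ b := hz
  induction b, hb using Int.leInduction with
  | base =>
    induction a, ha using Int.leInduction with
    | base => exact ⟨[(0, 0)], rfl, rfl, List.isChain_singleton _⟩
    | succ a _ ih =>
      obtain ⟨γ, hγ⟩ := ih
      exact ⟨_, hγ.snoc (Or.inl (by simp))⟩
  | succ b _ ih =>
    obtain ⟨γ, hγ⟩ := ih
    exact ⟨_, hγ.snoc (Or.inr (by simp))⟩

lemma finite_setOf_isPathTo (z : Site) : {γ : List Site | IsPathTo z γ}.Finite := by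
  set N := z.1 + z.2
  let B : Set Site := Set.Icc (0, 0) (N, N)
  have : Finite B := (Set.finite_Icc _ _).to_subtype
  refine ((List.finite_length_eq B (N + 1).toNat).image (List.map Subtype.val)).subset ?_
  intro γ hγ
  have hB : ∀ x ∈ γ, x ∈ B := by
    intro x hx
    obtain ⟨i, hi, rfl⟩ := List.mem_iff_getElem.1 hx
    have := hγ.getElem_coords i hi
    have := hγ.length_eq
    simp only [B, Set.mem_Icc, Prod.le_def]
    omega
  have hlen : γ.length = (N + 1).toNat := by have := hγ.length_eq; omega
  lift γ to List B using hB
  exact ⟨γ, by simpa using hlen, rfl⟩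

def lowerSite (u v : Site) : Site := if u.2 ≤ v.2 then u else v

def upperSite (u v : Site) : Site := if u.2 ≤ v.2 then v else u

lemma IsStep.lowerSite {a b a' b' : Site} (h : IsStep a b) (h' : IsStep a' b')
    (hs : a.1 + a.2 = a'.1 + a'.2) : IsStep (lowerSite a a') (lowerSite b b') := by
  rw [isStep_iff] at *
  unfold _root_.lowerSite
  split_ifs <;> omega

lemma IsStep.upperSite {a b a' b' : Site} (h : IsStep a b) (h' : IsStep a' b')
    (hs : a.1 + a.2 = a'.1 + a'.2) : IsStep (upperSite a a') (upperSite b b') := by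
  rw [isStep_iff] at *
  unfold _root_.upperSite
  split_ifs <;> omega

lemma plen_append (ω : Site → ℝ) (l l' : List Site) :
    plen ω (l ++ l') = plen ω l + plen ω l' := by
  simp [plen]

lemma plen_zipWith_lowerSite_add_upperSite (ω : Site → ℝ) :
    ∀ {l l' : List Site}, l.length = l'.length →
      plen ω (l.zipWith lowerSite l') + plen ω (l.zipWith upperSite l') = plen ω l + plen ω l'
  | [], [], _ => by simp [plen]
  | a :: l, b :: l', h => by
    have ih := plen_zipWith_lowerSite_add_upperSite ω (l := l) (l' := l') (by simpa using h)
    have hab : ω (lowerSite a b) + ω (upperSite a b) = ω a + ω b := by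
      unfold lowerSite upperSite
      split_ifs <;> ring
    simp only [plen, List.zipWith_cons_cons, List.map_cons, List.sum_cons] at ih ⊢
    linarith


lemma below_zipWith_lowerSite_left (γ γ' : List Site) : Below (γ.zipWith lowerSite γ') γ := by
  intro i h h'
  simp only [List.get_eq_getElem, List.getElem_zipWith, lowerSite]
  split_ifs <;> omega

lemma below_zipWith_lowerSite_right (γ γ' : List Site) : Below (γ.zipWith lowerSite γ') γ' := by
  intro i h h'
  simp only [List.get_eq_getElem, List.getElem_zipWith, lowerSite]
  split_ifs <;> omega

lemma Below.trans {a b c : List Site} (hab : Below a b) (hbc : Below b c)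
    (hl : a.length ≤ b.length) : Below a c :=
  fun i h h' => (hab i h (by omega)).trans (hbc i (by omega) h')

lemma Below.of_append {a b c d : List Site} (h : Below (a ++ c) (b ++ d)) : Below a b := by
  intro i hi hi'
  simpa [List.getElem_append_left hi, List.getElem_append_left hi'] using
    h i (by simp; omega) (by simp; omega)

section Optimal

variable {ω : Site → ℝ} {z : Site}

lemma exists_isOptimal (ω : Site → ℝ) (hz : z ∈ posQuad) : ∃ γ, IsOptimal ω z γ := by
  obtain ⟨γ, hγ, hmax⟩ := Set.exists_max_image _ (plen ω) (finite_setOf_isPathTo z)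
    (exists_isPathTo hz)
  exact ⟨γ, hγ, hmax⟩

/-- The site-wise maximum is a path as well, and the two together have length
`ω(γ) + ω(γ')`, so the minimum cannot be shorter than the optimum. -/
lemma IsOptimal.zipWith_lowerSite {γ γ' : List Site} (h : IsOptimal ω z γ)
    (h' : IsOptimal ω z γ') : IsOptimal ω z (γ.zipWith lowerSite γ') := by
  have hsum := plen_zipWith_lowerSite_add_upperSite ω (h.1.length_eq_length h'.1)
  have hup := h.2 _ (h.1.zipWith (fun u v => by unfold upperSite; split_ifs <;> simp)
    IsStep.upperSite h'.1)
  have := h'.2 _ h.1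
  refine ⟨h.1.zipWith (fun u v => by unfold lowerSite; split_ifs <;> simp) IsStep.lowerSite h'.1,
    fun δ hδ => ?_⟩
  have := h'.2 δ hδ
  linarith

lemma exists_isLowOptimal (ω : Site → ℝ) (hz : z ∈ posQuad) : ∃ γ, IsLowOptimal ω z γ := by
  obtain ⟨γ₀, hγ₀⟩ := exists_isOptimal ω hz
  have hfin : {γ | IsOptimal ω z γ}.Finite := (finite_setOf_isPathTo z).subset fun _ h => h.1
  suffices ∀ s : Finset (List Site), (∀ γ' ∈ s, IsOptimal ω z γ') →
      ∃ γ, IsOptimal ω z γ ∧ ∀ γ' ∈ s, Below γ γ' by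
    obtain ⟨γ, hγ, hbelow⟩ := this hfin.toFinset (by simp)
    exact ⟨γ, hγ, fun γ' h' => hbelow γ' (by simpa using h')⟩
  intro s
  induction s using Finset.induction_on with
  | empty => exact fun _ => ⟨γ₀, hγ₀, by simp⟩
  | insert a s _ ih =>
    intro hs
    obtain ⟨γ, hγ, hbelow⟩ := ih fun γ' h' => hs γ' (Finset.mem_insert_of_mem h')
    have ha := hs a (Finset.mem_insert_self a s)
    refine ⟨γ.zipWith lowerSite a, hγ.zipWith_lowerSite ha, fun γ' h' => ?_⟩
    rcases Finset.mem_insert.1 h' with rfl | h'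
    · exact below_zipWith_lowerSite_right γ γ'
    · exact (below_zipWith_lowerSite_left γ a).trans (hbelow γ' h') (by simp)

lemma IsLowOptimal.eq {γ γ' : List Site} (h : IsLowOptimal ω z γ) (h' : IsLowOptimal ω z γ') :
    γ = γ' :=
  h.1.1.ext h'.1.1 fun i hi hi' => le_antisymm (h.2 γ' h'.1 i hi hi') (h'.2 γ h.1 i hi' hi)

lemma lowOpt_eq {γ : List Site} (h : IsLowOptimal ω z γ) : lowOpt ω z = γ := by
  have hex : ∃ γ, IsLowOptimal ω z γ := ⟨γ, h⟩
  rw [lowOpt, dif_pos hex]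
  exact hex.choose_spec.eq h

lemma isLowOptimal_lowOpt (ω : Site → ℝ) (hz : z ∈ posQuad) :
    IsLowOptimal ω z (lowOpt ω z) := by
  obtain ⟨γ, hγ⟩ := exists_isLowOptimal ω hz
  rwa [lowOpt_eq hγ]

/-- An initial segment of a low-optimal path is low-optimal: otherwise replacing it by its
site-wise minimum with a competitor gives an optimal path that is not above the original. -/
lemma IsLowOptimal.of_append {w : Site} {l₁ l₂ : List Site} (h : IsLowOptimal ω z (l₁ ++ l₂))
    (h₁ : IsPathTo w l₁) : IsLowOptimal ω w l₁ := by
  have hopt : IsOptimal ω w l₁ := ⟨h₁, fun δ hδ => by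
    have := h.1.2 _ (h.1.1.splice h₁ hδ)
    rw [plen_append, plen_append] at this
    linarith⟩
  refine ⟨hopt, fun δ hδ => ?_⟩
  have hμ := hopt.zipWith_lowerSite hδ
  have hμl : plen ω (l₁.zipWith lowerSite δ) = plen ω l₁ := le_antisymm (hopt.2 _ hμ.1) (hμ.2 _ h₁)
  have hbelow : Below (l₁ ++ l₂) (l₁.zipWith lowerSite δ ++ l₂) :=
    h.2 _ ⟨h.1.1.splice h₁ hμ.1, fun δ' hδ' => by
      rw [plen_append, hμl, ← plen_append]
      exact h.1.2 δ' hδ'⟩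
  exact hbelow.of_append.trans (below_zipWith_lowerSite_right l₁ δ)
    (by simp [h₁.length_eq_length hδ.1])

lemma lowOpt_getElem (hz : z ∈ posQuad) {k : ℕ} (hk : k < (lowOpt ω z).length) :
    lowOpt ω (lowOpt ω z)[k] = (lowOpt ω z).take (k + 1) := by
  have h := isLowOptimal_lowOpt ω hz
  refine lowOpt_eq (IsLowOptimal.of_append (z := z) (l₂ := (lowOpt ω z).drop (k + 1)) ?_
    (h.1.1.take hk))
  rwa [List.take_append_drop]

lemma lowOpt_origin (ω : Site → ℝ) : lowOpt ω (0, 0) = [(0, 0)] := by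
  have h := (isLowOptimal_lowOpt ω (z := (0, 0)) ⟨le_rfl, le_rfl⟩).1.1
  have hl : (lowOpt ω (0, 0)).length = 1 := by
    have : ((lowOpt ω (0, 0)).length : ℤ) = 0 + 0 + 1 := h.length_eq
    omega
  obtain ⟨a, ha⟩ := List.length_eq_one_iff.1 hl
  rw [ha, ← h.getElem_zero (by omega)]
  simp [ha]

end Optimal

section Tree

variable {ω : Site → ℝ}

lemma treeV_origin (ω : Site → ℝ) : treeV ω (0, 0) = posQuad := by
  refine Set.Subset.antisymm (fun _ h => h.1) fun z hz => ⟨hz, ?_⟩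
  exact List.mem_of_mem_head? (isLowOptimal_lowOpt ω hz).1.1.1

lemma lowOpt_eq_append_of_isStep {z w w' : Site} (hz : z ∈ posQuad) (hw : w ∈ lowOpt ω z)
    (hw' : w' ∈ lowOpt ω z) (hs : IsStep w w') : lowOpt ω w' = lowOpt ω w ++ [w'] := by
  have h := (isLowOptimal_lowOpt ω hz).1.1
  obtain ⟨k, hk, rfl⟩ := List.mem_iff_getElem.1 hw
  obtain ⟨j, hj, rfl⟩ := List.mem_iff_getElem.1 hw'
  obtain rfl : j = k + 1 := by
    have := (h.getElem_coords j hj).1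
    have := (h.getElem_coords k hk).1
    have := hs.add_fst_snd
    omega
  rw [lowOpt_getElem hz hj, lowOpt_getElem hz hk, List.take_add_one (i := k + 1),
    List.getElem?_eq_getElem hj]
  rfl

/-- Kőnig's step: all but one vertex of `T_w` lie in the subtree of one of the two
successors of `w`, so one of them keeps infinitely many points of `A`. -/
lemma exists_isStep_infinite_treeV_inter {A : Set Site} {w : Site}
    (hinf : (treeV ω w ∩ A).Infinite) :
    ∃ w', IsStep w w' ∧ (treeV ω w ∩ treeV ω w' ∩ A).Infinite := by
  have hcover : (treeV ω w ∩ A) \ {w} ⊆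
      (treeV ω w ∩ treeV ω (w + (1, 0)) ∩ A) ∪ (treeV ω w ∩ treeV ω (w + (0, 1)) ∩ A) := by
    rintro z ⟨⟨⟨hz, hw⟩, hA⟩, hne⟩
    obtain ⟨w', hw', hs⟩ :=
      (isLowOptimal_lowOpt ω hz).1.1.exists_isStep_of_mem hw (Ne.symm hne)
    rcases hs with rfl | rfl
    exacts [Or.inl ⟨⟨⟨hz, hw⟩, hz, hw'⟩, hA⟩, Or.inr ⟨⟨⟨hz, hw⟩, hz, hw'⟩, hA⟩]
  rcases Set.infinite_union.1 ((hinf.sdiff (Set.finite_singleton w)).mono hcover) with h | h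
  exacts [⟨_, Or.inl rfl, h⟩, ⟨_, Or.inr rfl, h⟩]

theorem exists_infinite_lowOpt_path (ω : Site → ℝ) {A : Set Site} (hA : A ⊆ posQuad)
    (hinf : A.Infinite) :
    ∃ f : ℕ → Site, f 0 = (0, 0) ∧ (∀ n, IsStep (f n) (f (n + 1))) ∧
      (∀ n, lowOpt ω (f n) = (List.range (n + 1)).map f) ∧ ∀ n, (treeV ω (f n) ∩ A).Infinite := by
  choose next hnext using fun w : {w // (treeV ω w ∩ A).Infinite} =>
    exists_isStep_infinite_treeV_inter w.2
  let g : ℕ → {w // (treeV ω w ∩ A).Infinite} := fun n =>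
    Nat.rec ⟨(0, 0), by rwa [treeV_origin, Set.inter_eq_right.2 hA]⟩
      (fun _ w => ⟨next w, (hnext w).2.mono fun _ h => ⟨h.1.2, h.2⟩⟩) n
  refine ⟨fun n => (g n).1, rfl, fun n => (hnext (g n)).1, fun n => ?_, fun n => (g n).2⟩
  induction n with
  | zero => exact lowOpt_origin ω
  | succ n ih =>
    obtain ⟨z, ⟨⟨hz, hw⟩, -, hw'⟩, -⟩ := (hnext (g n)).2.nonempty
    rw [List.range_succ, List.map_append, ← ih]
    exact lowOpt_eq_append_of_isStep hz hw hw' (hnext (g n)).1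

end Tree

theorem infinite_tree_infinite_path_general (ω : Site → ℝ)
    (hinf : (treeV ω (1, 1)).Infinite) :
    ∃ f : ℕ → Site, f 0 = (0, 0) ∧ (∀ n : ℕ, IsStep (f n) (f (n + 1))) ∧
      (∃ n : ℕ, f n = (1, 1)) ∧
      (∀ n : ℕ, lowOpt ω (f n) = (List.range (n + 1)).map f) ∧
      (∃ n : ℕ, f n ≠ ((n : ℤ), 0)) ∧ (∃ n : ℕ, f n ≠ (0, (n : ℤ))) := by
  obtain ⟨f, hf0, hstep, hlow, htree⟩ :=
    exists_infinite_lowOpt_path ω (fun _ h => h.1) hinf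
  have hsum : (f 2).1 + (f 2).2 = 2 := by
    have h1 : (f 1).1 + (f 1).2 = 1 := by simpa [hf0] using (hstep 0).add_fst_snd
    have h2 : (f 2).1 + (f 2).2 = (f 1).1 + (f 1).2 + 1 := (hstep 1).add_fst_snd
    omega
  have hf2 : f 2 = (1, 1) := by
    obtain ⟨z, ⟨hz, h2⟩, -, h11⟩ := (htree 2).nonempty
    exact (isLowOptimal_lowOpt ω hz).1.1.eq_of_mem h2 h11 (by rw [hsum]; rfl)
  exact ⟨f, hf0, hstep, ⟨2, hf2⟩, hlow, ⟨2, by simp [hf2]⟩, ⟨2, by simp [hf2]⟩⟩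

/-- If `V(T_{(1,1)}^ω)` is infinite, then `T_{(1,1)}^ω` contains an infinite
low-optimal path, which is non trivial. -/
theorem infinite_tree_infinite_path (ω : Site → ℝ) (hω : ∀ z : Site, 0 ≤ ω z)
    (hinf : (treeV ω (1, 1)).Infinite) :
    ∃ f : ℕ → Site, f 0 = (0, 0) ∧ (∀ n : ℕ, IsStep (f n) (f (n + 1))) ∧
      (∃ n : ℕ, f n = (1, 1)) ∧
      (∀ n : ℕ, lowOpt ω (f n) = (List.range (n + 1)).map f) ∧
      (∃ n : ℕ, f n ≠ ((n : ℤ), 0)) ∧ (∃ n : ℕ, f n ≠ (0, (n : ℤ))) :=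
  infinite_tree_infinite_path_general ω hinf
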